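/- arXiv:1604.01704 — 4 statements merged into one kernel-verified Lean document; each statement's English description precedes it below -/
import Mathlib

section
/- Let B = k[s,t] be a polynomial ring in two variables over a field k, and let d ≥ 1. There is no polynomial f(x,y) ∈ B[x,y], homogeneous of degree d in x and y, such that f(s,1) = 1 in B and f(1,t) is a unit of B (i.e., a nonzero element of k). -/
open MvPolynomial

lemma mv_isUnit_eq_C {k : Type} [Field k] {p : MvPolynomial (Fin 2) k} (h : IsUnit p) :
    ∃ a : k, p = MvPolynomial.C a := by
  have h1 : IsUnit (MvPolynomial.finSuccEquiv k 1 p) := h.map (MvPolynomial.finSuccEquiv k 1)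
  obtain ⟨r, hr, hrp⟩ := Polynomial.isUnit_iff.mp h1
  have h2 : IsUnit (MvPolynomial.finSuccEquiv k 0 r) := hr.map (MvPolynomial.finSuccEquiv k 0)
  obtain ⟨r0, hr0, hr0p⟩ := Polynomial.isUnit_iff.mp h2
  refine ⟨r0.coeff 0, ?_⟩
  have hr0C : r0 = MvPolynomial.C (r0.coeff 0) := MvPolynomial.eq_C_of_isEmpty r0
  have hrC : r = MvPolynomial.C (r0.coeff 0) := by
    apply (MvPolynomial.finSuccEquiv k 0).injective
    rw [← hr0p]
    conv_lhs => rw [hr0C]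
    simp [MvPolynomial.finSuccEquiv_apply]
  apply (MvPolynomial.finSuccEquiv k 1).injective
  rw [← hrp, hrC]
  simp [MvPolynomial.finSuccEquiv_apply]

open LaurentPolynomial

/-- Over `B = k[s,t]` there is no form `f = ∑ cᵢ xⁱ y^{d-i}` of degree `d ≥ 1` with
`f(s,1) = 1` and `f(1,t)` a unit of `B`.  Here `s = X 0` and `t = X 1`. -/
theorem no_unit_restricting_form (k : Type) [Field k] (d : ℕ) (hd : 1 ≤ d) :
    ¬ ∃ c : Fin (d + 1) → MvPolynomial (Fin 2) k,
        (∑ i, c i * (X 0 : MvPolynomial (Fin 2) k) ^ (i : ℕ) = 1) ∧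
        IsUnit (∑ i, c i * (X 1 : MvPolynomial (Fin 2) k) ^ (d - (i : ℕ))) := by
  rintro ⟨c, h1, h2⟩
  obtain ⟨a, ha⟩ := mv_isUnit_eq_C h2
  have ha0 : a ≠ 0 := by
    rintro rfl
    rw [ha, map_zero] at h2
    exact not_isUnit_zero h2
  -- the map s ↦ T 1, t ↦ T (-1) into Laurent polynomials
  let φ : MvPolynomial (Fin 2) k →+* LaurentPolynomial k :=
    MvPolynomial.eval₂Hom (LaurentPolynomial.C) ![T 1, T (-1)]
  have hφ0 : φ (X 0) = T (1 : ℤ) := by simp [φ]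
  have hφ1 : φ (X 1) = T (-1 : ℤ) := by simp [φ]
  have e1 : ∑ i : Fin (d+1), φ (c i) * T ((i : ℕ) : ℤ) = 1 := by
    have := congrArg φ h1
    rw [map_sum, map_one] at this
    rw [← this]
    refine Finset.sum_congr rfl fun i _ => ?_
    rw [map_mul, map_pow, hφ0, T_pow, mul_one]
  have e2 : ∑ i : Fin (d+1), φ (c i) * T (-((d - (i : ℕ) : ℕ) : ℤ)) = LaurentPolynomial.C a := by
    have := congrArg φ ha
    rw [map_sum] at this
    have hC : φ (MvPolynomial.C a) = LaurentPolynomial.C a := by simp [φ]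
    rw [hC] at this
    rw [← this]
    refine Finset.sum_congr rfl fun i _ => ?_
    rw [map_mul, map_pow, hφ1, T_pow, mul_neg_one]
  have key : LaurentPolynomial.C a * T (d : ℤ) = 1 := by
    calc LaurentPolynomial.C a * T (d : ℤ)
        = (∑ i : Fin (d+1), φ (c i) * T (-((d - (i : ℕ) : ℕ) : ℤ))) * T (d : ℤ) := by rw [e2]
      _ = ∑ i : Fin (d+1), φ (c i) * T ((i : ℕ) : ℤ) := by
          rw [Finset.sum_mul]
          refine Finset.sum_congr rfl fun i _ => ?_
          rw [mul_assoc, ← T_add]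
          congr 2
          have hi : (i : ℕ) ≤ d := Nat.lt_succ_iff.mp i.2
          push_cast [Nat.cast_sub hi]
          ring
      _ = 1 := e1
  have hdeg : ((d : ℤ) : WithBot ℤ) = (0 : ℤ) := by
    have h1' : (LaurentPolynomial.C a * T (d : ℤ)).degree = ((d : ℤ) : WithBot ℤ) := degree_C_mul_T _ a ha0
    have h2' : (1 : LaurentPolynomial k).degree = ((0 : ℤ) : WithBot ℤ) := by
      rw [← map_one (LaurentPolynomial.C (R := k))]
      exact degree_C one_ne_zero
    rw [key, h2'] at h1'
    exact h1'.symm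
  have : (d : ℤ) = 0 := by exact_mod_cast hdeg
  omega
end

section
/- Over the field F_4, let a ∈ F_4 \ F_2. The cubic surface X = V(x³ + y³ + z³ + a·w³) ⊆ P³_{F_4} contains no line defined over F_4. -/
/-- Exactly one of the three field elements is zero. -/
def OZ {K : Type*} [Field K] (x y z : K) : Prop :=
  (x = 0 ∧ y ≠ 0 ∧ z ≠ 0) ∨ (x ≠ 0 ∧ y = 0 ∧ z ≠ 0) ∨ (x ≠ 0 ∧ y ≠ 0 ∧ z = 0)

lemma offd {K : Type*} [Field K] {a xk yk : K} (h1 : a ≠ 1)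
    (e1 : xk + yk = 0) (e2 : xk + a * yk = 0) (hyk : yk ≠ 0) : False := by
  have hk : (1 - a) * yk = 0 := by linear_combination e1 - e2
  rcases mul_eq_zero.mp hk with h | h
  · exact h1 (sub_eq_zero.mp h).symm
  · exact hyk h

lemma crux {K : Type*} [Field K] (htwo : (1 : K) + 1 = 0) (a : K)
    (h0 : a ≠ 0) (h1 : a ≠ 1) (x0 x1 x2 y0 y1 y2 : K)
    (H : ∀ c d : K, (c ≠ 0 ∨ d ≠ 0) →
      OZ (c * x0 + d * y0) (c * x1 + d * y1) (c * x2 + d * y2)) : False := by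
  have hx := H 1 0 (Or.inl one_ne_zero)
  have hy := H 0 1 (Or.inr one_ne_zero)
  simp only [OZ, one_mul, zero_mul, add_zero, zero_add] at hx hy
  rcases hx with ⟨hx0, hx1, hx2⟩ | ⟨hx0, hx1, hx2⟩ | ⟨hx0, hx1, hx2⟩ <;>
    rcases hy with ⟨hy0, hy1, hy2⟩ | ⟨hy0, hy1, hy2⟩ | ⟨hy0, hy1, hy2⟩
  -- (0,0) diagonal
  · have h := H y1 x1 (Or.inr hx1)
    have eA : y1 * x0 + x1 * y0 = 0 := by rw [hx0, hy0]; ring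
    have eB : y1 * x1 + x1 * y1 = 0 := by linear_combination x1 * y1 * htwo
    rcases h with ⟨-, hB, -⟩ | ⟨hA, -, -⟩ | ⟨hA, -, -⟩
    · exact hB eB
    · exact hA eA
    · exact hA eA
  -- (0,1) off-diagonal, k = 2
  · have e1 : x2 + y2 = 0 := by
      have h := H 1 1 (Or.inl one_ne_zero)
      simp only [OZ, one_mul] at h
      rcases h with ⟨hA, -, -⟩ | ⟨-, hB, -⟩ | ⟨-, -, hC⟩
      · rw [hx0, zero_add] at hA; exact absurd hA hy0
      · rw [hy1, add_zero] at hB; exact absurd hB hx1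
      · exact hC
    have e2 : x2 + a * y2 = 0 := by
      have h := H 1 a (Or.inl one_ne_zero)
      simp only [OZ, one_mul] at h
      rcases h with ⟨hA, -, -⟩ | ⟨-, hB, -⟩ | ⟨-, -, hC⟩
      · rw [hx0, zero_add] at hA; exact absurd hA (mul_ne_zero h0 hy0)
      · rw [hy1, mul_zero, add_zero] at hB; exact absurd hB hx1
      · exact hC
    exact offd h1 e1 e2 hy2
  -- (0,2) off-diagonal, k = 1
  · have e1 : x1 + y1 = 0 := by
      have h := H 1 1 (Or.inl one_ne_zero)
      simp only [OZ, one_mul] at h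
      rcases h with ⟨hA, -, -⟩ | ⟨-, hB, -⟩ | ⟨-, -, hC⟩
      · rw [hx0, zero_add] at hA; exact absurd hA hy0
      · exact hB
      · rw [hy2, add_zero] at hC; exact absurd hC hx2
    have e2 : x1 + a * y1 = 0 := by
      have h := H 1 a (Or.inl one_ne_zero)
      simp only [OZ, one_mul] at h
      rcases h with ⟨hA, -, -⟩ | ⟨-, hB, -⟩ | ⟨-, -, hC⟩
      · rw [hx0, zero_add] at hA; exact absurd hA (mul_ne_zero h0 hy0)
      · exact hB
      · rw [hy2, mul_zero, add_zero] at hC; exact absurd hC hx2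
    exact offd h1 e1 e2 hy1
  -- (1,0) off-diagonal, k = 2
  · have e1 : x2 + y2 = 0 := by
      have h := H 1 1 (Or.inl one_ne_zero)
      simp only [OZ, one_mul] at h
      rcases h with ⟨hA, -, -⟩ | ⟨-, hB, -⟩ | ⟨-, -, hC⟩
      · rw [hy0, add_zero] at hA; exact absurd hA hx0
      · rw [hx1, zero_add] at hB; exact absurd hB hy1
      · exact hC
    have e2 : x2 + a * y2 = 0 := by
      have h := H 1 a (Or.inl one_ne_zero)
      simp only [OZ, one_mul] at h
      rcases h with ⟨hA, -, -⟩ | ⟨-, hB, -⟩ | ⟨-, -, hC⟩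
      · rw [hy0, mul_zero, add_zero] at hA; exact absurd hA hx0
      · rw [hx1, zero_add] at hB; exact absurd hB (mul_ne_zero h0 hy1)
      · exact hC
    exact offd h1 e1 e2 hy2
  -- (1,1) diagonal
  · have h := H y0 x0 (Or.inr hx0)
    have eA : y0 * x0 + x0 * y0 = 0 := by linear_combination x0 * y0 * htwo
    have eB : y0 * x1 + x0 * y1 = 0 := by rw [hx1, hy1]; ring
    rcases h with ⟨-, hB, -⟩ | ⟨hA, -, -⟩ | ⟨hA, -, -⟩
    · exact hB eB
    · exact hA eA
    · exact hA eA
  -- (1,2) off-diagonal, k = 0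
  · have e1 : x0 + y0 = 0 := by
      have h := H 1 1 (Or.inl one_ne_zero)
      simp only [OZ, one_mul] at h
      rcases h with ⟨hA, -, -⟩ | ⟨-, hB, -⟩ | ⟨-, -, hC⟩
      · exact hA
      · rw [hx1, zero_add] at hB; exact absurd hB hy1
      · rw [hy2, add_zero] at hC; exact absurd hC hx2
    have e2 : x0 + a * y0 = 0 := by
      have h := H 1 a (Or.inl one_ne_zero)
      simp only [OZ, one_mul] at h
      rcases h with ⟨hA, -, -⟩ | ⟨-, hB, -⟩ | ⟨-, -, hC⟩
      · exact hA
      · rw [hx1, zero_add] at hB; exact absurd hB (mul_ne_zero h0 hy1)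
      · rw [hy2, mul_zero, add_zero] at hC; exact absurd hC hx2
    exact offd h1 e1 e2 hy0
  -- (2,0) off-diagonal, k = 1
  · have e1 : x1 + y1 = 0 := by
      have h := H 1 1 (Or.inl one_ne_zero)
      simp only [OZ, one_mul] at h
      rcases h with ⟨hA, -, -⟩ | ⟨-, hB, -⟩ | ⟨-, -, hC⟩
      · rw [hy0, add_zero] at hA; exact absurd hA hx0
      · exact hB
      · rw [hx2, zero_add] at hC; exact absurd hC hy2
    have e2 : x1 + a * y1 = 0 := by
      have h := H 1 a (Or.inl one_ne_zero)
      simp only [OZ, one_mul] at h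
      rcases h with ⟨hA, -, -⟩ | ⟨-, hB, -⟩ | ⟨-, -, hC⟩
      · rw [hy0, mul_zero, add_zero] at hA; exact absurd hA hx0
      · exact hB
      · rw [hx2, zero_add] at hC; exact absurd hC (mul_ne_zero h0 hy2)
    exact offd h1 e1 e2 hy1
  -- (2,1) off-diagonal, k = 0
  · have e1 : x0 + y0 = 0 := by
      have h := H 1 1 (Or.inl one_ne_zero)
      simp only [OZ, one_mul] at h
      rcases h with ⟨hA, -, -⟩ | ⟨-, hB, -⟩ | ⟨-, -, hC⟩
      · exact hA
      · rw [hy1, add_zero] at hB; exact absurd hB hx1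
      · rw [hx2, zero_add] at hC; exact absurd hC hy2
    have e2 : x0 + a * y0 = 0 := by
      have h := H 1 a (Or.inl one_ne_zero)
      simp only [OZ, one_mul] at h
      rcases h with ⟨hA, -, -⟩ | ⟨-, hB, -⟩ | ⟨-, -, hC⟩
      · exact hA
      · rw [hy1, mul_zero, add_zero] at hB; exact absurd hB hx1
      · rw [hx2, zero_add] at hC; exact absurd hC (mul_ne_zero h0 hy2)
    exact offd h1 e1 e2 hy0
  -- (2,2) diagonal
  · have h := H y0 x0 (Or.inr hx0)
    have eA : y0 * x0 + x0 * y0 = 0 := by linear_combination x0 * y0 * htwo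
    have eC : y0 * x2 + x0 * y2 = 0 := by rw [hx2, hy2]; ring
    rcases h with ⟨-, -, hC⟩ | ⟨hA, -, -⟩ | ⟨hA, -, -⟩
    · exact hC eC
    · exact hA eA
    · exact hA eA

/-- Over `F₄`, for `a ∈ F₄ \ F₂`, the cubic surface `x³ + y³ + z³ + a·w³ = 0` in `ℙ³`
contains no line defined over `F₄`: every 2-dimensional linear subspace of `F₄⁴` contains a
vector on which the cubic form does not vanish. -/
theorem cubic_surface_no_lines (a : GaloisField 2 2) (h0 : a ≠ 0) (h1 : a ≠ 1)
    (W : Submodule (GaloisField 2 2) (Fin 4 → GaloisField 2 2))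
    (hW : Module.finrank (GaloisField 2 2) W = 2) :
    ∃ v ∈ W, v 0 ^ 3 + v 1 ^ 3 + v 2 ^ 3 + a * v 3 ^ 3 ≠ 0 := by
  by_contra hcon
  push_neg at hcon
  have htwo : (1 : GaloisField 2 2) + 1 = 0 := by
    have h := CharP.cast_eq_zero (GaloisField 2 2) 2
    push_cast at h
    linear_combination h
  haveI : Fintype (GaloisField 2 2) := Fintype.ofFinite _
  have hcard : Fintype.card (GaloisField 2 2) = 4 := by
    have := GaloisField.card 2 2 (by norm_num)
    simpa using this
  have cube : ∀ x : GaloisField 2 2, x ≠ 0 → x ^ 3 = 1 := by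
    intro x hx
    have h := FiniteField.pow_card_sub_one_eq_one x hx
    rw [hcard] at h
    norm_num at h
    exact h
  -- every vector of W has last coordinate 0
  have hv3 : ∀ v ∈ W, v 3 = 0 := by
    intro v hv
    by_contra h3
    have heq := hcon v hv
    rw [cube _ h3, mul_one] at heq
    have c0 : v 0 ^ 3 = 0 ∨ v 0 ^ 3 = 1 := by
      rcases eq_or_ne (v 0) 0 with h | h
      · left; rw [h]; ring
      · right; exact cube _ h
    have c1 : v 1 ^ 3 = 0 ∨ v 1 ^ 3 = 1 := by
      rcases eq_or_ne (v 1) 0 with h | h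
      · left; rw [h]; ring
      · right; exact cube _ h
    have c2 : v 2 ^ 3 = 0 ∨ v 2 ^ 3 = 1 := by
      rcases eq_or_ne (v 2) 0 with h | h
      · left; rw [h]; ring
      · right; exact cube _ h
    rcases c0 with e0 | e0 <;> rcases c1 with e1 | e1 <;> rcases c2 with e2 | e2 <;>
      rw [e0, e1, e2] at heq <;>
      first
      | exact h0 (by linear_combination heq)
      | exact h1 (by linear_combination heq - htwo)
      | exact h0 (by linear_combination heq - htwo)
      | exact h1 (by linear_combination heq - htwo - htwo)
  -- every nonzero vector of W has exactly one zero among the first three coords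
  have hOZ : ∀ v ∈ W, v ≠ 0 → OZ (v 0) (v 1) (v 2) := by
    intro v hv hvne
    have heq := hcon v hv
    rw [hv3 v hv] at heq
    have heq' : v 0 ^ 3 + v 1 ^ 3 + v 2 ^ 3 = 0 := by linear_combination heq
    rcases eq_or_ne (v 0) 0 with e0 | e0 <;> rcases eq_or_ne (v 1) 0 with e1 | e1 <;>
      rcases eq_or_ne (v 2) 0 with e2 | e2
    · exfalso
      apply hvne
      funext i
      fin_cases i <;> simp [e0, e1, e2, hv3 v hv]
    · rw [e0, e1, cube _ e2] at heq'; norm_num at heq'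
    · rw [e0, cube _ e1, e2] at heq'; norm_num at heq'
    · exact Or.inl ⟨e0, e1, e2⟩
    · rw [cube _ e0, e1, e2] at heq'; norm_num at heq'
    · exact Or.inr (Or.inl ⟨e0, e1, e2⟩)
    · exact Or.inr (Or.inr ⟨e0, e1, e2⟩)
    · rw [cube _ e0, cube _ e1, cube _ e2] at heq'
      exact absurd (show (1 : GaloisField 2 2) = 0 by linear_combination heq' - htwo) one_ne_zero
  -- take a basis of W
  let b := Module.finBasisOfFinrankEq (GaloisField 2 2) W hW
  have hli : LinearIndependent (GaloisField 2 2)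
      (fun i => ((b i : W) : Fin 4 → GaloisField 2 2)) :=
    b.linearIndependent.map' W.subtype W.ker_subtype
  set u : Fin 4 → GaloisField 2 2 := ((b 0 : W) : Fin 4 → GaloisField 2 2) with hu
  set v : Fin 4 → GaloisField 2 2 := ((b 1 : W) : Fin 4 → GaloisField 2 2) with hv
  have H : ∀ c d : GaloisField 2 2, (c ≠ 0 ∨ d ≠ 0) →
      OZ (c * u 0 + d * v 0) (c * u 1 + d * v 1) (c * u 2 + d * v 2) := by
    intro c d hcd
    have hwW : c • u + d • v ∈ W := W.add_mem (W.smul_mem c (b 0).2) (W.smul_mem d (b 1).2)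
    have hwne : c • u + d • v ≠ 0 := by
      intro h
      have hz := Fintype.linearIndependent_iff.mp hli ![c, d] ?_
      · rcases hcd with hc | hc
        · exact hc (by simpa using hz 0)
        · exact hc (by simpa using hz 1)
      · rw [Fin.sum_univ_two]
        simpa using h
    have := hOZ _ hwW hwne
    simpa [Pi.add_apply, Pi.smul_apply, smul_eq_mul] using this
  exact crux htwo a h0 h1 (u 0) (u 1) (u 2) (v 0) (v 1) (v 2) H
end

section
/- Over F_4, the Fermat cubic surface X' = V(x³ + y³ + z³ + w³) ⊆ P³_{F_4} contains exactly 27 lines defined over F_4. -/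
abbrev K : Type := GaloisField 2 2
noncomputable instance : Fintype K := Fintype.ofFinite K
lemma cardK : Fintype.card K = 4 := by
  rw [← Nat.card_eq_fintype_card]
  have := GaloisField.card 2 2 (by norm_num)
  norm_num at this ⊢; exact this
lemma cube (x : K) (h : x ≠ 0) : x ^ 3 = 1 := by
  have := FiniteField.pow_card_sub_one_eq_one x h
  rwa [cardK] at this
lemma addself (x : K) : x + x = 0 := CharTwo.add_self_eq_zero x

open scoped Classical in
lemma cardNe : Nat.card {x : K // x ≠ 0} = 3 := by
  rw [Nat.card_eq_fintype_card, Fintype.card_subtype_compl, cardK, Fintype.card_subtype_eq]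
lemma parity {x y z w : K} (h : x^3+y^3+z^3+w^3 = 0) :
    (x = 0 ∧ y = 0 ∧ z = 0 ∧ w = 0) ∨
    (x ≠ 0 ∧ y ≠ 0 ∧ z = 0 ∧ w = 0) ∨
    (x ≠ 0 ∧ y = 0 ∧ z ≠ 0 ∧ w = 0) ∨
    (x ≠ 0 ∧ y = 0 ∧ z = 0 ∧ w ≠ 0) ∨
    (x = 0 ∧ y ≠ 0 ∧ z ≠ 0 ∧ w = 0) ∨
    (x = 0 ∧ y ≠ 0 ∧ z = 0 ∧ w ≠ 0) ∨
    (x = 0 ∧ y = 0 ∧ z ≠ 0 ∧ w ≠ 0) ∨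
    (x ≠ 0 ∧ y ≠ 0 ∧ z ≠ 0 ∧ w ≠ 0) := by
  rcases eq_or_ne x 0 with hx|hx <;> rcases eq_or_ne y 0 with hy|hy <;> rcases eq_or_ne z 0 with hz|hz <;> rcases eq_or_ne w 0 with hw|hw
  · exact Or.inl ⟨hx, hy, hz, hw⟩
  · subst hx; subst hy; subst hz
    exact absurd (by linear_combination h - cube w hw) (one_ne_zero (α := K))
  · subst hx; subst hy; subst hw
    exact absurd (by linear_combination h - cube z hz) (one_ne_zero (α := K))
  · exact Or.inr (Or.inr (Or.inr (Or.inr (Or.inr (Or.inr (Or.inl ⟨hx, hy, hz, hw⟩))))))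
  · subst hx; subst hz; subst hw
    exact absurd (by linear_combination h - cube y hy) (one_ne_zero (α := K))
  · exact Or.inr (Or.inr (Or.inr (Or.inr (Or.inr (Or.inl ⟨hx, hy, hz, hw⟩)))))
  · exact Or.inr (Or.inr (Or.inr (Or.inr (Or.inl ⟨hx, hy, hz, hw⟩))))
  · subst hx
    exact absurd (by linear_combination h - cube y hy - cube z hz - cube w hw - addself 1) (one_ne_zero (α := K))
  · subst hy; subst hz; subst hw
    exact absurd (by linear_combination h - cube x hx) (one_ne_zero (α := K))
  · exact Or.inr (Or.inr (Or.inr (Or.inl ⟨hx, hy, hz, hw⟩)))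
  · exact Or.inr (Or.inr (Or.inl ⟨hx, hy, hz, hw⟩))
  · subst hy
    exact absurd (by linear_combination h - cube x hx - cube z hz - cube w hw - addself 1) (one_ne_zero (α := K))
  · exact Or.inr (Or.inl ⟨hx, hy, hz, hw⟩)
  · subst hz
    exact absurd (by linear_combination h - cube x hx - cube y hy - cube w hw - addself 1) (one_ne_zero (α := K))
  · subst hw
    exact absurd (by linear_combination h - cube x hx - cube y hy - cube z hz - addself 1) (one_ne_zero (α := K))
  · exact Or.inr (Or.inr (Or.inr (Or.inr (Or.inr (Or.inr (Or.inr (⟨hx, hy, hz, hw⟩)))))))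

abbrev V : Type := Fin 4 → K

noncomputable def Lv : Fin 3 → K → V := ![fun α => ![1, α, 0, 0], fun α => ![1, 0, α, 0], fun α => ![1, 0, 0, α]]
noncomputable def Lw : Fin 3 → K → V := ![fun β => ![0, 0, 1, β], fun β => ![0, 1, 0, β], fun β => ![0, 1, β, 0]]

noncomputable def Line (p : Fin 3) (α β : K) : Submodule K V := Submodule.span K {Lv p α, Lw p β}

lemma li (p : Fin 3) (α β : K) : LinearIndependent K ![Lv p α, Lw p β] := by
  rw [LinearIndependent.pair_iff]
  intro s t hst
  have h0 := congrFun hst 0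
  have h1 := congrFun hst 1
  have h2 := congrFun hst 2
  fin_cases p <;> simp [Lv, Lw] at h0 h1 h2 <;> tauto

lemma finrank_Line (p : Fin 3) (α β : K) : Module.finrank K (Line p α β) = 2 := by
  have hr : ({Lv p α, Lw p β} : Set V) = Set.range ![Lv p α, Lw p β] := by
    simp [Matrix.range_cons, Matrix.range_empty, Set.pair_comm]
  rw [Line, hr, finrank_span_eq_card (li p α β), Fintype.card_fin]

lemma cubic_Line (p : Fin 3) (α β : K) (hα : α ≠ 0) (hβ : β ≠ 0) :
    ∀ v ∈ Line p α β, v 0 ^ 3 + v 1 ^ 3 + v 2 ^ 3 + v 3 ^ 3 = 0 := by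
  intro v hv
  rw [Line, Submodule.mem_span_pair] at hv
  obtain ⟨c, d, rfl⟩ := hv
  have h1 := cube α hα
  have h2 := cube β hβ
  fin_cases p <;> simp [Lv, Lw] <;>
    linear_combination c ^ 3 * h1 + d ^ 3 * h2 + addself (c ^ 3) + addself (d ^ 3)

set_option maxHeartbeats 800000 in
lemma line_inj {p p' : Fin 3} {α β α' β' : K} (hα' : α' ≠ 0)
    (h : Line p α β = Line p' α' β') : p = p' ∧ α = α' ∧ β = β' := by
  have m1 : Lv p α ∈ Line p' α' β' := by
    rw [← h]; exact Submodule.subset_span (by simp)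
  have m2 : Lw p β ∈ Line p' α' β' := by
    rw [← h]; exact Submodule.subset_span (by simp)
  rw [Line, Submodule.mem_span_pair] at m1 m2
  obtain ⟨c, d, hc⟩ := m1
  obtain ⟨c', d', hc'⟩ := m2
  have e0 := congrFun hc 0; have e1 := congrFun hc 1
  have e2 := congrFun hc 2; have e3 := congrFun hc 3
  have f0 := congrFun hc' 0; have f1 := congrFun hc' 1
  have f2 := congrFun hc' 2; have f3 := congrFun hc' 3
  clear hc hc' h
  fin_cases p <;> fin_cases p' <;>
    simp [Lv, Lw, Matrix.vecHead, Matrix.vecTail] at e0 e1 e2 e3 f0 f1 f2 f3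
  · exact ⟨rfl, by rw [e0, one_mul] at e1; exact e1.symm, by rw [f2, one_mul] at f3; exact f3.symm⟩
  · exact absurd (e2.resolve_left (by rw [e0]; exact one_ne_zero)) hα'
  · exact absurd (e3.resolve_left (by rw [e0]; exact one_ne_zero)) hα'
  · exact absurd (e1.resolve_left (by rw [e0]; exact one_ne_zero)) hα'
  · exact ⟨rfl, by rw [e0, one_mul] at e2; exact e2.symm, by rw [f1, one_mul] at f3; exact f3.symm⟩
  · exact absurd (e3.resolve_left (by rw [e0]; exact one_ne_zero)) hα'
  · exact absurd (e1.resolve_left (by rw [e0]; exact one_ne_zero)) hα'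
  · exact absurd (e2.resolve_left (by rw [e0]; exact one_ne_zero)) hα'
  · exact ⟨rfl, by rw [e0, one_mul] at e3; exact e3.symm, by rw [f1, one_mul] at f2; exact f2.symm⟩

lemma exists_span_pair (W : Submodule K V) (hrk : Module.finrank K W = 2) :
    ∃ a b : V, a ∈ W ∧ b ∈ W ∧ LinearIndependent K ![a, b] ∧ Submodule.span K {a, b} = W := by
  have : FiniteDimensional K W := inferInstance
  let B := Module.finBasisOfFinrankEq K W hrk
  refine ⟨B 0, B 1, (B 0).2, (B 1).2, ?_, ?_⟩
  · have h1 : LinearIndependent K (W.subtype ∘ B) :=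
      (B.linearIndependent.map' W.subtype (Submodule.ker_subtype W))
    have h2 : ![(B 0 : V), (B 1 : V)] = (W.subtype ∘ B) ∘ ![0, 1] := by
      funext i; fin_cases i <;> rfl
    rw [h2]
    refine h1.comp _ ?_
    intro i j hij
    fin_cases i <;> fin_cases j <;> simp_all <;> rfl
  · have : Submodule.span K (Set.range (W.subtype ∘ B)) = W := by
      rw [Set.range_comp, Submodule.span_image, B.span_eq, Submodule.map_top,
        Submodule.range_subtype]
    have hre : Set.range (W.subtype ∘ B) = {(B 0 : V), (B 1 : V)} := by
      ext x
      simp only [Set.mem_range, Function.comp_apply, Set.mem_insert_iff, Set.mem_singleton_iff]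
      constructor
      · rintro ⟨i, rfl⟩; fin_cases i <;> simp
      · rintro (rfl | rfl); exacts [⟨0, rfl⟩, ⟨1, rfl⟩]
    rw [hre] at this
    exact this

lemma exists_indep (W : Submodule K V) (hrk : Module.finrank K W = 2) {a b : V}
    (hspan : Submodule.span K {a, b} = W) {c : V} (hc : c ≠ 0) :
    ∃ u ∈ W, LinearIndependent K ![c, u] := by
  by_contra hcon
  push_neg at hcon
  have ha : a ∈ W := hspan ▸ Submodule.subset_span (by simp)
  have hb : b ∈ W := hspan ▸ Submodule.subset_span (by simp)
  have ha' : ∃ s : K, a = s • c := by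
    have := hcon a ha
    rw [LinearIndependent.pair_iff' hc] at this
    push_neg at this
    obtain ⟨s, hs⟩ := this
    exact ⟨s, hs.symm⟩
  have hb' : ∃ s : K, b = s • c := by
    have := hcon b hb
    rw [LinearIndependent.pair_iff' hc] at this
    push_neg at this
    obtain ⟨s, hs⟩ := this
    exact ⟨s, hs.symm⟩
  have hle : W ≤ Submodule.span K {c} := by
    rw [← hspan]
    rw [Submodule.span_le]
    rintro x (rfl | rfl)
    · obtain ⟨s, rfl⟩ := ha'; exact Submodule.smul_mem _ _ (Submodule.mem_span_singleton_self c)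
    · obtain ⟨s, rfl⟩ := hb'; exact Submodule.smul_mem _ _ (Submodule.mem_span_singleton_self c)
  have h1 := Submodule.finrank_mono hle
  rw [hrk] at h1
  have h2 : Module.finrank K (Submodule.span K {c}) = 1 := finrank_span_singleton hc
  omega

lemma parity_mid {x y z w : K} (h : x^3+y^3+z^3+w^3 = 0) (hx : x ≠ 0) (hy : y = 0) :
    (z ≠ 0 ∧ w = 0) ∨ (z = 0 ∧ w ≠ 0) := by
  rcases parity h with ⟨q,-,-,-⟩|⟨-,q,-,-⟩|⟨-,-,qz,qw⟩|⟨-,-,qz,qw⟩|⟨q,-,-,-⟩|⟨q,-,-,-⟩|⟨q,-,-,-⟩|⟨-,q,-,-⟩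
  · exact absurd q hx
  · exact absurd hy q
  · exact Or.inl ⟨qz, qw⟩
  · exact Or.inr ⟨qz, qw⟩
  · exact absurd q hx
  · exact absurd q hx
  · exact absurd q hx
  · exact absurd hy q

lemma parity3 {x y z w : K} (h : x^3+y^3+z^3+w^3 = 0) (hx : x ≠ 0) (hy : y ≠ 0)
    (hz : z ≠ 0) (hw : w = 0) : False := by
  rcases parity h with ⟨q,-,-,-⟩|⟨-,-,q,-⟩|⟨-,q,-,-⟩|⟨-,-,q,-⟩|⟨q,-,-,-⟩|⟨q,-,-,-⟩|⟨q,-,-,-⟩|⟨-,-,-,q⟩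
  · exact hx q
  · exact hz q
  · exact hy q
  · exact hz q
  · exact hx q
  · exact hx q
  · exact hx q
  · exact q hw

lemma parity2 {x y z w : K} (h : x^3+y^3+z^3+w^3 = 0) (hx : x = 0) (hy : y = 0)
    (hne : ¬(z = 0 ∧ w = 0)) : z ≠ 0 ∧ w ≠ 0 := by
  rcases parity h with ⟨-,-,qz,qw⟩|⟨q,-,-,-⟩|⟨q,-,-,-⟩|⟨q,-,-,-⟩|⟨-,q,-,-⟩|⟨-,q,-,-⟩|⟨-,-,qz,qw⟩|⟨q,-,-,-⟩
  · exact absurd ⟨qz, qw⟩ hne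
  · exact absurd hx q
  · exact absurd hx q
  · exact absurd hx q
  · exact absurd hy q
  · exact absurd hy q
  · exact ⟨qz, qw⟩
  · exact absurd hx q

open scoped Classical in
lemma exists_ne_ne (x y : K) : ∃ t : K, t ≠ x ∧ t ≠ y := by
  by_contra hc
  push_neg at hc
  have hsub : (Finset.univ : Finset K) ⊆ {x, y} := by
    intro t _
    rcases eq_or_ne t x with rfl | h
    · simp
    · simp [hc t h]
  have h1 := Finset.card_le_card hsub
  have h2 : ({x, y} : Finset K).card ≤ 2 :=
    le_trans (Finset.card_insert_le _ _) (by simp)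
  rw [Finset.card_univ, cardK] at h1
  omega

lemma case01 (W : Submodule K V) (hrk : Module.finrank K W = 2)
    (hcub : ∀ v ∈ W, v 0 ^ 3 + v 1 ^ 3 + v 2 ^ 3 + v 3 ^ 3 = 0) {a b : V}
    (hspan : Submodule.span K {a, b} = W) {c : V} (hcW : c ∈ W)
    (hn1 : c 0 ≠ 0) (hn2 : c 1 ≠ 0) (hz1 : c 2 = 0) (hz2 : c 3 = 0) :
    ∃ p α β, α ≠ 0 ∧ β ≠ 0 ∧ W = Line p α β := by
  have hc0 : c ≠ 0 := fun h => hn1 (by rw [h]; rfl)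
  obtain ⟨u, huW, hli⟩ := exists_indep W hrk hspan hc0
  set u1 := u - (u 1 / c 1) • c with hu1def
  have hu1W : u1 ∈ W := W.sub_mem huW (W.smul_mem _ hcW)
  have hu1j : u1 1 = 0 := by
    simp only [hu1def, Pi.sub_apply, Pi.smul_apply, smul_eq_mul]
    rw [div_mul_cancel₀ _ hn2, sub_self]
  have hu1ne : u1 ≠ 0 := by
    intro h
    have heq : (u 1 / c 1) • c + (-1 : K) • u = -u1 := by rw [hu1def]; module
    rw [h, neg_zero] at heq
    obtain ⟨-, hbad⟩ := LinearIndependent.pair_iff.mp hli _ _ heq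
    exact (neg_ne_zero.mpr one_ne_zero) hbad
  have hperm : (u1 0)^3 + (u1 1)^3 + (u1 2)^3 + (u1 3)^3 = 0 := by
    linear_combination hcub u1 hu1W
  have hu1i : u1 0 = 0 := by
    by_contra hu10
    have hcases := parity_mid hperm hu10 hu1j
    obtain ⟨t, ht0, htt⟩ := exists_ne_ne (0 : K) (-(c 0) / u1 0)
    have hzW : c + t • u1 ∈ W := W.add_mem hcW (W.smul_mem _ hu1W)
    have hzi : (c + t • u1) 0 ≠ 0 := by
      simp only [Pi.add_apply, Pi.smul_apply, smul_eq_mul]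
      intro h
      exact htt (by rw [eq_div_iff hu10]; linear_combination h)
    have hzj : (c + t • u1) 1 ≠ 0 := by
      simpa [hu1j] using hn2
    rcases hcases with ⟨hk', hl'⟩ | ⟨hk', hl'⟩
    · have hzk : (c + t • u1) 2 ≠ 0 := by
        simp only [Pi.add_apply, Pi.smul_apply, smul_eq_mul, hz1, zero_add]
        exact mul_ne_zero ht0 hk'
      have hzl : (c + t • u1) 3 = 0 := by simp [hz2, hl']
      have hzperm : ((c + t • u1) 0)^3 + ((c + t • u1) 1)^3 + ((c + t • u1) 2)^3
          + ((c + t • u1) 3)^3 = 0 := by linear_combination hcub _ hzW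
      exact parity3 hzperm hzi hzj hzk hzl
    · have hzk : (c + t • u1) 2 = 0 := by simp [hz1, hk']
      have hzl : (c + t • u1) 3 ≠ 0 := by
        simp only [Pi.add_apply, Pi.smul_apply, smul_eq_mul, hz2, zero_add]
        exact mul_ne_zero ht0 hl'
      have hzperm : ((c + t • u1) 0)^3 + ((c + t • u1) 1)^3 + ((c + t • u1) 3)^3
          + ((c + t • u1) 2)^3 = 0 := by linear_combination hcub _ hzW
      exact parity3 hzperm hzi hzj hzl hzk
  have hfin : u1 2 ≠ 0 ∧ u1 3 ≠ 0 := by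
    refine parity2 hperm hu1i hu1j ?_
    rintro ⟨q1, q2⟩
    exact hu1ne (by funext m; fin_cases m <;> assumption)
  refine ⟨0, c 1 / c 0, u1 3 / u1 2, div_ne_zero hn2 hn1, div_ne_zero hfin.2 hfin.1, ?_⟩
  have hLv : Lv 0 (c 1 / c 0) = (c 0)⁻¹ • c := by
    funext m
    fin_cases m <;> simp [Lv, Matrix.vecHead, Matrix.vecTail, hz1, hz2, inv_mul_cancel₀ hn1, div_eq_inv_mul]
  have hLw : Lw 0 (u1 3 / u1 2) = (u1 2)⁻¹ • u1 := by
    funext m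
    fin_cases m <;> simp [Lw, Matrix.vecHead, Matrix.vecTail, hu1i, hu1j, inv_mul_cancel₀ hfin.1, div_eq_inv_mul]
  have hle : Line 0 (c 1 / c 0) (u1 3 / u1 2) ≤ W := by
    rw [Line, Submodule.span_le]
    rintro x (rfl | rfl)
    · rw [hLv]; exact W.smul_mem _ hcW
    · rw [hLw]; exact W.smul_mem _ hu1W
  exact (Submodule.eq_of_le_of_finrank_le hle (by rw [finrank_Line, hrk])).symm

lemma case23 (W : Submodule K V) (hrk : Module.finrank K W = 2)
    (hcub : ∀ v ∈ W, v 0 ^ 3 + v 1 ^ 3 + v 2 ^ 3 + v 3 ^ 3 = 0) {a b : V}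
    (hspan : Submodule.span K {a, b} = W) {c : V} (hcW : c ∈ W)
    (hn1 : c 2 ≠ 0) (hn2 : c 3 ≠ 0) (hz1 : c 0 = 0) (hz2 : c 1 = 0) :
    ∃ p α β, α ≠ 0 ∧ β ≠ 0 ∧ W = Line p α β := by
  have hc0 : c ≠ 0 := fun h => hn1 (by rw [h]; rfl)
  obtain ⟨u, huW, hli⟩ := exists_indep W hrk hspan hc0
  set u1 := u - (u 3 / c 3) • c with hu1def
  have hu1W : u1 ∈ W := W.sub_mem huW (W.smul_mem _ hcW)
  have hu1j : u1 3 = 0 := by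
    simp only [hu1def, Pi.sub_apply, Pi.smul_apply, smul_eq_mul]
    rw [div_mul_cancel₀ _ hn2, sub_self]
  have hu1ne : u1 ≠ 0 := by
    intro h
    have heq : (u 3 / c 3) • c + (-1 : K) • u = -u1 := by rw [hu1def]; module
    rw [h, neg_zero] at heq
    obtain ⟨-, hbad⟩ := LinearIndependent.pair_iff.mp hli _ _ heq
    exact (neg_ne_zero.mpr one_ne_zero) hbad
  have hperm : (u1 2)^3 + (u1 3)^3 + (u1 0)^3 + (u1 1)^3 = 0 := by
    linear_combination hcub u1 hu1W
  have hu1i : u1 2 = 0 := by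
    by_contra hu10
    have hcases := parity_mid hperm hu10 hu1j
    obtain ⟨t, ht0, htt⟩ := exists_ne_ne (0 : K) (-(c 2) / u1 2)
    have hzW : c + t • u1 ∈ W := W.add_mem hcW (W.smul_mem _ hu1W)
    have hzi : (c + t • u1) 2 ≠ 0 := by
      simp only [Pi.add_apply, Pi.smul_apply, smul_eq_mul]
      intro h
      exact htt (by rw [eq_div_iff hu10]; linear_combination h)
    have hzj : (c + t • u1) 3 ≠ 0 := by
      simpa [hu1j] using hn2
    rcases hcases with ⟨hk', hl'⟩ | ⟨hk', hl'⟩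
    · have hzk : (c + t • u1) 0 ≠ 0 := by
        simp only [Pi.add_apply, Pi.smul_apply, smul_eq_mul, hz1, zero_add]
        exact mul_ne_zero ht0 hk'
      have hzl : (c + t • u1) 1 = 0 := by simp [hz2, hl']
      have hzperm : ((c + t • u1) 2)^3 + ((c + t • u1) 3)^3 + ((c + t • u1) 0)^3
          + ((c + t • u1) 1)^3 = 0 := by linear_combination hcub _ hzW
      exact parity3 hzperm hzi hzj hzk hzl
    · have hzk : (c + t • u1) 0 = 0 := by simp [hz1, hk']
      have hzl : (c + t • u1) 1 ≠ 0 := by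
        simp only [Pi.add_apply, Pi.smul_apply, smul_eq_mul, hz2, zero_add]
        exact mul_ne_zero ht0 hl'
      have hzperm : ((c + t • u1) 2)^3 + ((c + t • u1) 3)^3 + ((c + t • u1) 1)^3
          + ((c + t • u1) 0)^3 = 0 := by linear_combination hcub _ hzW
      exact parity3 hzperm hzi hzj hzl hzk
  have hfin : u1 0 ≠ 0 ∧ u1 1 ≠ 0 := by
    refine parity2 hperm hu1i hu1j ?_
    rintro ⟨q1, q2⟩
    exact hu1ne (by funext m; fin_cases m <;> assumption)
  refine ⟨0, u1 1 / u1 0, c 3 / c 2, div_ne_zero hfin.2 hfin.1, div_ne_zero hn2 hn1, ?_⟩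
  have hLv : Lv 0 (u1 1 / u1 0) = (u1 0)⁻¹ • u1 := by
    funext m
    fin_cases m <;> simp [Lv, Matrix.vecHead, Matrix.vecTail, hu1i, hu1j, inv_mul_cancel₀ hfin.1, div_eq_inv_mul]
  have hLw : Lw 0 (c 3 / c 2) = (c 2)⁻¹ • c := by
    funext m
    fin_cases m <;> simp [Lw, Matrix.vecHead, Matrix.vecTail, hz1, hz2, inv_mul_cancel₀ hn1, div_eq_inv_mul]
  have hle : Line 0 (u1 1 / u1 0) (c 3 / c 2) ≤ W := by
    rw [Line, Submodule.span_le]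
    rintro x (rfl | rfl)
    · rw [hLv]; exact W.smul_mem _ hu1W
    · rw [hLw]; exact W.smul_mem _ hcW
  exact (Submodule.eq_of_le_of_finrank_le hle (by rw [finrank_Line, hrk])).symm

lemma case02 (W : Submodule K V) (hrk : Module.finrank K W = 2)
    (hcub : ∀ v ∈ W, v 0 ^ 3 + v 1 ^ 3 + v 2 ^ 3 + v 3 ^ 3 = 0) {a b : V}
    (hspan : Submodule.span K {a, b} = W) {c : V} (hcW : c ∈ W)
    (hn1 : c 0 ≠ 0) (hn2 : c 2 ≠ 0) (hz1 : c 1 = 0) (hz2 : c 3 = 0) :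
    ∃ p α β, α ≠ 0 ∧ β ≠ 0 ∧ W = Line p α β := by
  have hc0 : c ≠ 0 := fun h => hn1 (by rw [h]; rfl)
  obtain ⟨u, huW, hli⟩ := exists_indep W hrk hspan hc0
  set u1 := u - (u 2 / c 2) • c with hu1def
  have hu1W : u1 ∈ W := W.sub_mem huW (W.smul_mem _ hcW)
  have hu1j : u1 2 = 0 := by
    simp only [hu1def, Pi.sub_apply, Pi.smul_apply, smul_eq_mul]
    rw [div_mul_cancel₀ _ hn2, sub_self]
  have hu1ne : u1 ≠ 0 := by
    intro h
    have heq : (u 2 / c 2) • c + (-1 : K) • u = -u1 := by rw [hu1def]; module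
    rw [h, neg_zero] at heq
    obtain ⟨-, hbad⟩ := LinearIndependent.pair_iff.mp hli _ _ heq
    exact (neg_ne_zero.mpr one_ne_zero) hbad
  have hperm : (u1 0)^3 + (u1 2)^3 + (u1 1)^3 + (u1 3)^3 = 0 := by
    linear_combination hcub u1 hu1W
  have hu1i : u1 0 = 0 := by
    by_contra hu10
    have hcases := parity_mid hperm hu10 hu1j
    obtain ⟨t, ht0, htt⟩ := exists_ne_ne (0 : K) (-(c 0) / u1 0)
    have hzW : c + t • u1 ∈ W := W.add_mem hcW (W.smul_mem _ hu1W)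
    have hzi : (c + t • u1) 0 ≠ 0 := by
      simp only [Pi.add_apply, Pi.smul_apply, smul_eq_mul]
      intro h
      exact htt (by rw [eq_div_iff hu10]; linear_combination h)
    have hzj : (c + t • u1) 2 ≠ 0 := by
      simpa [hu1j] using hn2
    rcases hcases with ⟨hk', hl'⟩ | ⟨hk', hl'⟩
    · have hzk : (c + t • u1) 1 ≠ 0 := by
        simp only [Pi.add_apply, Pi.smul_apply, smul_eq_mul, hz1, zero_add]
        exact mul_ne_zero ht0 hk'
      have hzl : (c + t • u1) 3 = 0 := by simp [hz2, hl']
      have hzperm : ((c + t • u1) 0)^3 + ((c + t • u1) 2)^3 + ((c + t • u1) 1)^3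
          + ((c + t • u1) 3)^3 = 0 := by linear_combination hcub _ hzW
      exact parity3 hzperm hzi hzj hzk hzl
    · have hzk : (c + t • u1) 1 = 0 := by simp [hz1, hk']
      have hzl : (c + t • u1) 3 ≠ 0 := by
        simp only [Pi.add_apply, Pi.smul_apply, smul_eq_mul, hz2, zero_add]
        exact mul_ne_zero ht0 hl'
      have hzperm : ((c + t • u1) 0)^3 + ((c + t • u1) 2)^3 + ((c + t • u1) 3)^3
          + ((c + t • u1) 1)^3 = 0 := by linear_combination hcub _ hzW
      exact parity3 hzperm hzi hzj hzl hzk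
  have hfin : u1 1 ≠ 0 ∧ u1 3 ≠ 0 := by
    refine parity2 hperm hu1i hu1j ?_
    rintro ⟨q1, q2⟩
    exact hu1ne (by funext m; fin_cases m <;> assumption)
  refine ⟨1, c 2 / c 0, u1 3 / u1 1, div_ne_zero hn2 hn1, div_ne_zero hfin.2 hfin.1, ?_⟩
  have hLv : Lv 1 (c 2 / c 0) = (c 0)⁻¹ • c := by
    funext m
    fin_cases m <;> simp [Lv, Matrix.vecHead, Matrix.vecTail, hz1, hz2, inv_mul_cancel₀ hn1, div_eq_inv_mul]
  have hLw : Lw 1 (u1 3 / u1 1) = (u1 1)⁻¹ • u1 := by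
    funext m
    fin_cases m <;> simp [Lw, Matrix.vecHead, Matrix.vecTail, hu1i, hu1j, inv_mul_cancel₀ hfin.1, div_eq_inv_mul]
  have hle : Line 1 (c 2 / c 0) (u1 3 / u1 1) ≤ W := by
    rw [Line, Submodule.span_le]
    rintro x (rfl | rfl)
    · rw [hLv]; exact W.smul_mem _ hcW
    · rw [hLw]; exact W.smul_mem _ hu1W
  exact (Submodule.eq_of_le_of_finrank_le hle (by rw [finrank_Line, hrk])).symm

lemma case13 (W : Submodule K V) (hrk : Module.finrank K W = 2)
    (hcub : ∀ v ∈ W, v 0 ^ 3 + v 1 ^ 3 + v 2 ^ 3 + v 3 ^ 3 = 0) {a b : V}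
    (hspan : Submodule.span K {a, b} = W) {c : V} (hcW : c ∈ W)
    (hn1 : c 1 ≠ 0) (hn2 : c 3 ≠ 0) (hz1 : c 0 = 0) (hz2 : c 2 = 0) :
    ∃ p α β, α ≠ 0 ∧ β ≠ 0 ∧ W = Line p α β := by
  have hc0 : c ≠ 0 := fun h => hn1 (by rw [h]; rfl)
  obtain ⟨u, huW, hli⟩ := exists_indep W hrk hspan hc0
  set u1 := u - (u 3 / c 3) • c with hu1def
  have hu1W : u1 ∈ W := W.sub_mem huW (W.smul_mem _ hcW)
  have hu1j : u1 3 = 0 := by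
    simp only [hu1def, Pi.sub_apply, Pi.smul_apply, smul_eq_mul]
    rw [div_mul_cancel₀ _ hn2, sub_self]
  have hu1ne : u1 ≠ 0 := by
    intro h
    have heq : (u 3 / c 3) • c + (-1 : K) • u = -u1 := by rw [hu1def]; module
    rw [h, neg_zero] at heq
    obtain ⟨-, hbad⟩ := LinearIndependent.pair_iff.mp hli _ _ heq
    exact (neg_ne_zero.mpr one_ne_zero) hbad
  have hperm : (u1 1)^3 + (u1 3)^3 + (u1 0)^3 + (u1 2)^3 = 0 := by
    linear_combination hcub u1 hu1W
  have hu1i : u1 1 = 0 := by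
    by_contra hu10
    have hcases := parity_mid hperm hu10 hu1j
    obtain ⟨t, ht0, htt⟩ := exists_ne_ne (0 : K) (-(c 1) / u1 1)
    have hzW : c + t • u1 ∈ W := W.add_mem hcW (W.smul_mem _ hu1W)
    have hzi : (c + t • u1) 1 ≠ 0 := by
      simp only [Pi.add_apply, Pi.smul_apply, smul_eq_mul]
      intro h
      exact htt (by rw [eq_div_iff hu10]; linear_combination h)
    have hzj : (c + t • u1) 3 ≠ 0 := by
      simpa [hu1j] using hn2
    rcases hcases with ⟨hk', hl'⟩ | ⟨hk', hl'⟩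
    · have hzk : (c + t • u1) 0 ≠ 0 := by
        simp only [Pi.add_apply, Pi.smul_apply, smul_eq_mul, hz1, zero_add]
        exact mul_ne_zero ht0 hk'
      have hzl : (c + t • u1) 2 = 0 := by simp [hz2, hl']
      have hzperm : ((c + t • u1) 1)^3 + ((c + t • u1) 3)^3 + ((c + t • u1) 0)^3
          + ((c + t • u1) 2)^3 = 0 := by linear_combination hcub _ hzW
      exact parity3 hzperm hzi hzj hzk hzl
    · have hzk : (c + t • u1) 0 = 0 := by simp [hz1, hk']
      have hzl : (c + t • u1) 2 ≠ 0 := by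
        simp only [Pi.add_apply, Pi.smul_apply, smul_eq_mul, hz2, zero_add]
        exact mul_ne_zero ht0 hl'
      have hzperm : ((c + t • u1) 1)^3 + ((c + t • u1) 3)^3 + ((c + t • u1) 2)^3
          + ((c + t • u1) 0)^3 = 0 := by linear_combination hcub _ hzW
      exact parity3 hzperm hzi hzj hzl hzk
  have hfin : u1 0 ≠ 0 ∧ u1 2 ≠ 0 := by
    refine parity2 hperm hu1i hu1j ?_
    rintro ⟨q1, q2⟩
    exact hu1ne (by funext m; fin_cases m <;> assumption)
  refine ⟨1, u1 2 / u1 0, c 3 / c 1, div_ne_zero hfin.2 hfin.1, div_ne_zero hn2 hn1, ?_⟩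
  have hLv : Lv 1 (u1 2 / u1 0) = (u1 0)⁻¹ • u1 := by
    funext m
    fin_cases m <;> simp [Lv, Matrix.vecHead, Matrix.vecTail, hu1i, hu1j, inv_mul_cancel₀ hfin.1, div_eq_inv_mul]
  have hLw : Lw 1 (c 3 / c 1) = (c 1)⁻¹ • c := by
    funext m
    fin_cases m <;> simp [Lw, Matrix.vecHead, Matrix.vecTail, hz1, hz2, inv_mul_cancel₀ hn1, div_eq_inv_mul]
  have hle : Line 1 (u1 2 / u1 0) (c 3 / c 1) ≤ W := by
    rw [Line, Submodule.span_le]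
    rintro x (rfl | rfl)
    · rw [hLv]; exact W.smul_mem _ hu1W
    · rw [hLw]; exact W.smul_mem _ hcW
  exact (Submodule.eq_of_le_of_finrank_le hle (by rw [finrank_Line, hrk])).symm

lemma case03 (W : Submodule K V) (hrk : Module.finrank K W = 2)
    (hcub : ∀ v ∈ W, v 0 ^ 3 + v 1 ^ 3 + v 2 ^ 3 + v 3 ^ 3 = 0) {a b : V}
    (hspan : Submodule.span K {a, b} = W) {c : V} (hcW : c ∈ W)
    (hn1 : c 0 ≠ 0) (hn2 : c 3 ≠ 0) (hz1 : c 1 = 0) (hz2 : c 2 = 0) :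
    ∃ p α β, α ≠ 0 ∧ β ≠ 0 ∧ W = Line p α β := by
  have hc0 : c ≠ 0 := fun h => hn1 (by rw [h]; rfl)
  obtain ⟨u, huW, hli⟩ := exists_indep W hrk hspan hc0
  set u1 := u - (u 3 / c 3) • c with hu1def
  have hu1W : u1 ∈ W := W.sub_mem huW (W.smul_mem _ hcW)
  have hu1j : u1 3 = 0 := by
    simp only [hu1def, Pi.sub_apply, Pi.smul_apply, smul_eq_mul]
    rw [div_mul_cancel₀ _ hn2, sub_self]
  have hu1ne : u1 ≠ 0 := by
    intro h
    have heq : (u 3 / c 3) • c + (-1 : K) • u = -u1 := by rw [hu1def]; module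
    rw [h, neg_zero] at heq
    obtain ⟨-, hbad⟩ := LinearIndependent.pair_iff.mp hli _ _ heq
    exact (neg_ne_zero.mpr one_ne_zero) hbad
  have hperm : (u1 0)^3 + (u1 3)^3 + (u1 1)^3 + (u1 2)^3 = 0 := by
    linear_combination hcub u1 hu1W
  have hu1i : u1 0 = 0 := by
    by_contra hu10
    have hcases := parity_mid hperm hu10 hu1j
    obtain ⟨t, ht0, htt⟩ := exists_ne_ne (0 : K) (-(c 0) / u1 0)
    have hzW : c + t • u1 ∈ W := W.add_mem hcW (W.smul_mem _ hu1W)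
    have hzi : (c + t • u1) 0 ≠ 0 := by
      simp only [Pi.add_apply, Pi.smul_apply, smul_eq_mul]
      intro h
      exact htt (by rw [eq_div_iff hu10]; linear_combination h)
    have hzj : (c + t • u1) 3 ≠ 0 := by
      simpa [hu1j] using hn2
    rcases hcases with ⟨hk', hl'⟩ | ⟨hk', hl'⟩
    · have hzk : (c + t • u1) 1 ≠ 0 := by
        simp only [Pi.add_apply, Pi.smul_apply, smul_eq_mul, hz1, zero_add]
        exact mul_ne_zero ht0 hk'
      have hzl : (c + t • u1) 2 = 0 := by simp [hz2, hl']
      have hzperm : ((c + t • u1) 0)^3 + ((c + t • u1) 3)^3 + ((c + t • u1) 1)^3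
          + ((c + t • u1) 2)^3 = 0 := by linear_combination hcub _ hzW
      exact parity3 hzperm hzi hzj hzk hzl
    · have hzk : (c + t • u1) 1 = 0 := by simp [hz1, hk']
      have hzl : (c + t • u1) 2 ≠ 0 := by
        simp only [Pi.add_apply, Pi.smul_apply, smul_eq_mul, hz2, zero_add]
        exact mul_ne_zero ht0 hl'
      have hzperm : ((c + t • u1) 0)^3 + ((c + t • u1) 3)^3 + ((c + t • u1) 2)^3
          + ((c + t • u1) 1)^3 = 0 := by linear_combination hcub _ hzW
      exact parity3 hzperm hzi hzj hzl hzk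
  have hfin : u1 1 ≠ 0 ∧ u1 2 ≠ 0 := by
    refine parity2 hperm hu1i hu1j ?_
    rintro ⟨q1, q2⟩
    exact hu1ne (by funext m; fin_cases m <;> assumption)
  refine ⟨2, c 3 / c 0, u1 2 / u1 1, div_ne_zero hn2 hn1, div_ne_zero hfin.2 hfin.1, ?_⟩
  have hLv : Lv 2 (c 3 / c 0) = (c 0)⁻¹ • c := by
    funext m
    fin_cases m <;> simp [Lv, Matrix.vecHead, Matrix.vecTail, hz1, hz2, inv_mul_cancel₀ hn1, div_eq_inv_mul]
  have hLw : Lw 2 (u1 2 / u1 1) = (u1 1)⁻¹ • u1 := by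
    funext m
    fin_cases m <;> simp [Lw, Matrix.vecHead, Matrix.vecTail, hu1i, hu1j, inv_mul_cancel₀ hfin.1, div_eq_inv_mul]
  have hle : Line 2 (c 3 / c 0) (u1 2 / u1 1) ≤ W := by
    rw [Line, Submodule.span_le]
    rintro x (rfl | rfl)
    · rw [hLv]; exact W.smul_mem _ hcW
    · rw [hLw]; exact W.smul_mem _ hu1W
  exact (Submodule.eq_of_le_of_finrank_le hle (by rw [finrank_Line, hrk])).symm

lemma case12 (W : Submodule K V) (hrk : Module.finrank K W = 2)
    (hcub : ∀ v ∈ W, v 0 ^ 3 + v 1 ^ 3 + v 2 ^ 3 + v 3 ^ 3 = 0) {a b : V}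
    (hspan : Submodule.span K {a, b} = W) {c : V} (hcW : c ∈ W)
    (hn1 : c 1 ≠ 0) (hn2 : c 2 ≠ 0) (hz1 : c 0 = 0) (hz2 : c 3 = 0) :
    ∃ p α β, α ≠ 0 ∧ β ≠ 0 ∧ W = Line p α β := by
  have hc0 : c ≠ 0 := fun h => hn1 (by rw [h]; rfl)
  obtain ⟨u, huW, hli⟩ := exists_indep W hrk hspan hc0
  set u1 := u - (u 2 / c 2) • c with hu1def
  have hu1W : u1 ∈ W := W.sub_mem huW (W.smul_mem _ hcW)
  have hu1j : u1 2 = 0 := by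
    simp only [hu1def, Pi.sub_apply, Pi.smul_apply, smul_eq_mul]
    rw [div_mul_cancel₀ _ hn2, sub_self]
  have hu1ne : u1 ≠ 0 := by
    intro h
    have heq : (u 2 / c 2) • c + (-1 : K) • u = -u1 := by rw [hu1def]; module
    rw [h, neg_zero] at heq
    obtain ⟨-, hbad⟩ := LinearIndependent.pair_iff.mp hli _ _ heq
    exact (neg_ne_zero.mpr one_ne_zero) hbad
  have hperm : (u1 1)^3 + (u1 2)^3 + (u1 0)^3 + (u1 3)^3 = 0 := by
    linear_combination hcub u1 hu1W
  have hu1i : u1 1 = 0 := by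
    by_contra hu10
    have hcases := parity_mid hperm hu10 hu1j
    obtain ⟨t, ht0, htt⟩ := exists_ne_ne (0 : K) (-(c 1) / u1 1)
    have hzW : c + t • u1 ∈ W := W.add_mem hcW (W.smul_mem _ hu1W)
    have hzi : (c + t • u1) 1 ≠ 0 := by
      simp only [Pi.add_apply, Pi.smul_apply, smul_eq_mul]
      intro h
      exact htt (by rw [eq_div_iff hu10]; linear_combination h)
    have hzj : (c + t • u1) 2 ≠ 0 := by
      simpa [hu1j] using hn2
    rcases hcases with ⟨hk', hl'⟩ | ⟨hk', hl'⟩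
    · have hzk : (c + t • u1) 0 ≠ 0 := by
        simp only [Pi.add_apply, Pi.smul_apply, smul_eq_mul, hz1, zero_add]
        exact mul_ne_zero ht0 hk'
      have hzl : (c + t • u1) 3 = 0 := by simp [hz2, hl']
      have hzperm : ((c + t • u1) 1)^3 + ((c + t • u1) 2)^3 + ((c + t • u1) 0)^3
          + ((c + t • u1) 3)^3 = 0 := by linear_combination hcub _ hzW
      exact parity3 hzperm hzi hzj hzk hzl
    · have hzk : (c + t • u1) 0 = 0 := by simp [hz1, hk']
      have hzl : (c + t • u1) 3 ≠ 0 := by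
        simp only [Pi.add_apply, Pi.smul_apply, smul_eq_mul, hz2, zero_add]
        exact mul_ne_zero ht0 hl'
      have hzperm : ((c + t • u1) 1)^3 + ((c + t • u1) 2)^3 + ((c + t • u1) 3)^3
          + ((c + t • u1) 0)^3 = 0 := by linear_combination hcub _ hzW
      exact parity3 hzperm hzi hzj hzl hzk
  have hfin : u1 0 ≠ 0 ∧ u1 3 ≠ 0 := by
    refine parity2 hperm hu1i hu1j ?_
    rintro ⟨q1, q2⟩
    exact hu1ne (by funext m; fin_cases m <;> assumption)
  refine ⟨2, u1 3 / u1 0, c 2 / c 1, div_ne_zero hfin.2 hfin.1, div_ne_zero hn2 hn1, ?_⟩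
  have hLv : Lv 2 (u1 3 / u1 0) = (u1 0)⁻¹ • u1 := by
    funext m
    fin_cases m <;> simp [Lv, Matrix.vecHead, Matrix.vecTail, hu1i, hu1j, inv_mul_cancel₀ hfin.1, div_eq_inv_mul]
  have hLw : Lw 2 (c 2 / c 1) = (c 1)⁻¹ • c := by
    funext m
    fin_cases m <;> simp [Lw, Matrix.vecHead, Matrix.vecTail, hz1, hz2, inv_mul_cancel₀ hn1, div_eq_inv_mul]
  have hle : Line 2 (u1 3 / u1 0) (c 2 / c 1) ≤ W := by
    rw [Line, Submodule.span_le]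
    rintro x (rfl | rfl)
    · rw [hLv]; exact W.smul_mem _ hu1W
    · rw [hLw]; exact W.smul_mem _ hcW
  exact (Submodule.eq_of_le_of_finrank_le hle (by rw [finrank_Line, hrk])).symm

lemma line_surj (W : Submodule K V) (hrk : Module.finrank K W = 2)
    (hcub : ∀ v ∈ W, v 0 ^ 3 + v 1 ^ 3 + v 2 ^ 3 + v 3 ^ 3 = 0) :
    ∃ p α β, α ≠ 0 ∧ β ≠ 0 ∧ W = Line p α β := by
  obtain ⟨a, b, haW, hbW, hli, hspan⟩ := exists_span_pair W hrk
  have ha0 : a ≠ 0 := by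
    intro h
    obtain ⟨q, -⟩ := LinearIndependent.pair_iff.mp hli 1 0 (by rw [h]; simp)
    exact one_ne_zero q
  have hex : ∃ i, a i ≠ 0 := by
    by_contra hno
    push_neg at hno
    exact ha0 (funext fun i => hno i)
  obtain ⟨i0, hi0⟩ := hex
  set c := b - (b i0 / a i0) • a with hcdef
  have hcW : c ∈ W := W.sub_mem hbW (W.smul_mem _ haW)
  have hci0 : c i0 = 0 := by
    simp only [hcdef, Pi.sub_apply, Pi.smul_apply, smul_eq_mul]
    rw [div_mul_cancel₀ _ hi0, sub_self]
  have hcne : c ≠ 0 := by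
    intro h
    have heq : (b i0 / a i0) • a + (-1 : K) • b = -c := by rw [hcdef]; module
    rw [h, neg_zero] at heq
    obtain ⟨-, hbad⟩ := LinearIndependent.pair_iff.mp hli _ _ heq
    exact (neg_ne_zero.mpr one_ne_zero) hbad
  have hne4 : ¬(c 0 ≠ 0 ∧ c 1 ≠ 0 ∧ c 2 ≠ 0 ∧ c 3 ≠ 0) := by
    rintro ⟨q0, q1, q2, q3⟩
    fin_cases i0
    exacts [q0 hci0, q1 hci0, q2 hci0, q3 hci0]
  have hne0 : ¬(c 0 = 0 ∧ c 1 = 0 ∧ c 2 = 0 ∧ c 3 = 0) := by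
    rintro ⟨q0, q1, q2, q3⟩
    exact hcne (by funext m; fin_cases m <;> assumption)
  rcases parity (hcub c hcW) with h|h|h|h|h|h|h|h
  · exact absurd h hne0
  · exact case01 W hrk hcub hspan hcW h.1 h.2.1 h.2.2.1 h.2.2.2
  · exact case02 W hrk hcub hspan hcW h.1 h.2.2.1 h.2.1 h.2.2.2
  · exact case03 W hrk hcub hspan hcW h.1 h.2.2.2 h.2.1 h.2.2.1
  · exact case12 W hrk hcub hspan hcW h.2.1 h.2.2.1 h.1 h.2.2.2
  · exact case13 W hrk hcub hspan hcW h.2.1 h.2.2.2 h.1 h.2.2.1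
  · exact case23 W hrk hcub hspan hcW h.2.2.1 h.2.2.2 h.1 h.2.1
  · exact absurd h hne4

noncomputable def lineMap : Fin 3 × {x : K // x ≠ 0} × {x : K // x ≠ 0} →
    {W : Submodule K V // Module.finrank K W = 2 ∧
      ∀ v ∈ W, v 0 ^ 3 + v 1 ^ 3 + v 2 ^ 3 + v 3 ^ 3 = (0 : K)} :=
  fun q => ⟨Line q.1 q.2.1 q.2.2,
    finrank_Line _ _ _, cubic_Line _ _ _ q.2.1.2 q.2.2.2⟩

/-- Over `F₄`, the Fermat cubic surface `x³ + y³ + z³ + w³ = 0` in `ℙ³` contains exactly `27`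
lines defined over `F₄`: there are exactly `27` two-dimensional linear subspaces of `F₄⁴` on
which the cubic form vanishes identically. -/
theorem fermat_cubic_27_lines :
    Nat.card {W : Submodule (GaloisField 2 2) (Fin 4 → GaloisField 2 2) //
        Module.finrank (GaloisField 2 2) W = 2 ∧
        ∀ v ∈ W, v 0 ^ 3 + v 1 ^ 3 + v 2 ^ 3 + v 3 ^ 3 = (0 : GaloisField 2 2)} = 27 := by
  have hbij : Function.Bijective lineMap := by
    constructor
    · rintro ⟨p, ⟨α, hα⟩, ⟨β, hβ⟩⟩ ⟨p', ⟨α', hα'⟩, ⟨β', hβ'⟩⟩ h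
      simp only [lineMap, Subtype.mk.injEq] at h
      obtain ⟨hp, ha, hb⟩ := line_inj hα' h
      subst hp; subst ha; subst hb
      rfl
    · rintro ⟨W, hrk, hcub⟩
      obtain ⟨p, α, β, hα, hβ, rfl⟩ := line_surj W hrk hcub
      exact ⟨⟨p, ⟨α, hα⟩, ⟨β, hβ⟩⟩, rfl⟩
  have hcard := Nat.card_eq_of_bijective lineMap hbij
  rw [Nat.card_prod, Nat.card_prod, cardNe] at hcard
  simp only [Nat.card_eq_fintype_card, Fintype.card_fin] at hcard
  rw [← hcard]
end

section
/- Let X = V((y−(1+t)x)(x−(1−t)y)) ⊆ P¹_{k[t]} over a field k, consisting of the two sections [1:1+t] and [1−t:1]. A homogeneous form of degree d in k[t][x,y] restricting to a unit (element of k[t]^× = k^×) at both points exists if and only if the characteristic of k is p > 0 and p divides d. Equivalently, the image of the 2×(d+1) matrix with rows (1, 1+t, (1+t)², ..., (1+t)^d) and ((1−t)^d, ..., (1−t), 1) over k[t] contains a vector with both coordinates units if and only if char k = p divides d. -/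
open Polynomial Finset

lemma one_sub_X_pow_coeff (k : Type) [CommRing k] (j : ℕ) :
    ((1 - X : k[X])^j).coeff 0 = 1 ∧ ((1 - X : k[X])^j).coeff 1 = -(j:k) := by
  induction j with
  | zero => simp [Polynomial.coeff_one]
  | succ n ih =>
    have h : (1 - X : k[X])^(n+1) = (1-X)^n - (1-X)^n * X := by ring
    refine ⟨?_, ?_⟩ <;> rw [h] <;>
      simp [coeff_sub, coeff_mul_X, coeff_mul_X_zero, ih.1, ih.2] <;> push_cast <;> ring

lemma aux_dvd (k : Type) [Field k] (d i : ℕ) (hi : i ≤ d) :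
    (X:k[X])^2 ∣ (1+X)^i - (1 + C (d:k) * X) * (1-X)^(d-i) := by
  rw [Polynomial.X_pow_dvd_iff]
  intro n hn
  have expand : (1 + C (d:k) * X) * (1-X:k[X])^(d-i)
      = (1-X)^(d-i) + C (d:k) * ((1-X)^(d-i) * X) := by ring
  interval_cases n
  · simp [coeff_sub, expand, coeff_C_mul, coeff_mul_X_zero,
      coeff_one_add_X_pow, (one_sub_X_pow_coeff k (d-i)).1]
  · rw [coeff_sub, expand, coeff_add, coeff_C_mul, coeff_mul_X,
      coeff_one_add_X_pow, (one_sub_X_pow_coeff k (d-i)).2, (one_sub_X_pow_coeff k (d-i)).1]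
    have : ((d - i : ℕ) : k) = (d:k) - (i:k) := by
      exact_mod_cast Nat.cast_sub hi
    simp [Nat.choose_one_right, this]

/-- For `X = V((y−(1+t)x)(x−(1−t)y)) ⊆ ℙ¹_{k[t]}`: a degree-`d` form restricting to a unit
at both sections exists iff `char k = p > 0` and `p ∣ d`.  Written in coordinates: there are
`c₀, …, c_d ∈ k[t]` with `∑ cᵢ (1+t)ⁱ` and `∑ cᵢ (1−t)^{d−i}` both units iff
`ringChar k ≠ 0` and `ringChar k ∣ d`. -/
theorem unit_values_iff_char_dvd (k : Type) [Field k] (d : ℕ) (hd : 1 ≤ d) :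
    (∃ c : Fin (d + 1) → Polynomial k,
        IsUnit (∑ i, c i * (1 + Polynomial.X) ^ (i : ℕ)) ∧
        IsUnit (∑ i, c i * (1 - Polynomial.X) ^ (d - (i : ℕ)))) ↔
      (ringChar k ≠ 0 ∧ ringChar k ∣ d) := by
  have _inst : CharP k (ringChar k) := ringChar.charP k
  constructor
  · rintro ⟨c, hA, hB⟩
    rw [Polynomial.isUnit_iff] at hA hB
    obtain ⟨a, haU, hA⟩ := hA
    obtain ⟨b, hbU, hB⟩ := hB
    have key : (X:k[X])^2 ∣ C a - (1 + C (d:k) * X) * C b := by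
      rw [hA, hB, Finset.mul_sum, ← Finset.sum_sub_distrib]
      refine Finset.dvd_sum fun i _ => ?_
      have h2 : c i * (1+X)^(i:ℕ) - (1 + C (d:k)*X) * (c i * (1-X)^(d-(i:ℕ)))
          = c i * ((1+X)^(i:ℕ) - (1 + C (d:k)*X) * (1-X)^(d-(i:ℕ))) := by ring
      rw [h2]
      exact (aux_dvd k d i (by omega)).mul_left _
    rw [Polynomial.X_pow_dvd_iff] at key
    have h0 := key 0 (by norm_num)
    have h1 := key 1 (by norm_num)
    have expand : (1 + C (d:k) * X) * C b = C b + C ((d:k)*b) * X := by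
      rw [C_mul]; ring
    rw [expand] at h0 h1
    simp [coeff_sub, coeff_add, coeff_C, coeff_C_mul, coeff_mul_X, coeff_mul_X_zero,
      Polynomial.coeff_one] at h0 h1
    -- h0 : a - b = 0 (roughly), h1 : (d:k)*b = 0 (roughly)
    have hb : b ≠ 0 := hbU.ne_zero
    have hdk : (d:k) = 0 := h1.resolve_right hb
    refine ⟨?_, ringChar.dvd hdk⟩
    intro hzero
    rw [hzero] at _inst
    have : d = 0 := by
      have := (CharP.cast_eq_zero_iff k 0 d).mp hdk
      simpa using this
    omega
  · rintro ⟨hp0, hpd⟩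
    have hdk : (d:k) = 0 := (CharP.cast_eq_zero_iff k (ringChar k) d).mpr hpd
    have hp2 : 2 ≤ ringChar k :=
      ((CharP.char_is_prime_or_zero k (ringChar k)).resolve_right hp0).two_le
    have hd2 : 2 ≤ d := le_trans hp2 (Nat.le_of_dvd (by omega) hpd)
    obtain ⟨m, rfl⟩ : ∃ m, d = m + 2 := ⟨d - 2, by omega⟩
    -- the geometric sum S with X * S = 1 - (1-X)^(m+2)
    set S : k[X] := ∑ i ∈ Finset.range (m+2), (1-X)^i with hSdef
    have hS1 : X * S = 1 - (1-X)^(m+2) := by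
      have h := geom_sum_mul (1-X : k[X]) (m+2)
      rw [← hSdef] at h
      linear_combination -h
    have hXS : X ∣ S := by
      rw [Polynomial.X_dvd_iff, hSdef, Polynomial.finset_sum_coeff]
      have : ∀ i ∈ Finset.range (m+2), ((1-X:k[X])^i).coeff 0 = 1 :=
        fun i _ => (one_sub_X_pow_coeff k i).1
      rw [Finset.sum_congr rfl this]
      simp only [Finset.sum_const, Finset.card_range, nsmul_eq_mul, mul_one]
      exact_mod_cast hdk
    obtain ⟨u, hu⟩ := hXS
    -- Q with X^2 * Q = (1-X)*(1-X^2)^(m+1) - 1 + X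
    set Q : k[X] := -(1-X) * ∑ i ∈ Finset.range (m+1), (1-X^2)^i with hQdef
    have hQ : X^2 * Q = (1-X) * ((1-X)^(m+1) * (1+X)^(m+1)) - 1 + X := by
      have h := geom_sum_mul (1-X^2 : k[X]) (m+1)
      have hW : (1-X^2:k[X])^(m+1) = (1-X)^(m+1) * (1+X)^(m+1) := by
        rw [← mul_pow]; congr 1; ring
      rw [hW] at h
      rw [hQdef]
      linear_combination (1-X) * h
    refine ⟨fun i => (if (i:ℕ) = 0 then 1 - X*u*(1+X)^(m+1) else 0)
      + (if (i:ℕ) = m then (1+X)*(u*Q) else 0)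
      + (if (i:ℕ) = m+1 then -((2+X)*(u*Q) + u) else 0)
      + (if (i:ℕ) = m+2 then u*Q + u else 0), ?_, ?_⟩
    · have hsum : (∑ i : Fin (m+2+1),
          ((if (i:ℕ) = 0 then 1 - X*u*(1+X)^(m+1) else 0)
            + (if (i:ℕ) = m then (1+X)*(u*Q) else 0)
            + (if (i:ℕ) = m+1 then -((2+X)*(u*Q) + u) else 0)
            + (if (i:ℕ) = m+2 then u*Q + u else 0)) * (1+X)^(i:ℕ)) = 1 := by
        rw [Fin.sum_univ_eq_sum_range (fun n =>
          ((if n = 0 then 1 - X*u*(1+X)^(m+1) else 0)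
            + (if n = m then (1+X)*(u*Q) else 0)
            + (if n = m+1 then -((2+X)*(u*Q) + u) else 0)
            + (if n = m+2 then u*Q + u else 0)) * (1+X)^n)]
        simp only [add_mul, ite_mul, zero_mul, Finset.sum_add_distrib,
          Finset.sum_ite_eq', Finset.mem_range]
        rw [if_pos (by omega), if_pos (by omega), if_pos (by omega), if_pos (by omega)]
        have e1 : (1+X:k[X])^(m+1) = (1+X)^m * (1+X)^1 := pow_add _ m 1
        have e2 : (1+X:k[X])^(m+2) = (1+X)^m * (1+X)^2 := pow_add _ m 2
        rw [e1, e2]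
        ring
      rw [hsum]; exact isUnit_one
    · have hsum : (∑ i : Fin (m+2+1),
          ((if (i:ℕ) = 0 then 1 - X*u*(1+X)^(m+1) else 0)
            + (if (i:ℕ) = m then (1+X)*(u*Q) else 0)
            + (if (i:ℕ) = m+1 then -((2+X)*(u*Q) + u) else 0)
            + (if (i:ℕ) = m+2 then u*Q + u else 0)) * (1-X)^(m+2-(i:ℕ))) = 1 := by
        rw [Fin.sum_univ_eq_sum_range (fun n =>
          ((if n = 0 then 1 - X*u*(1+X)^(m+1) else 0)
            + (if n = m then (1+X)*(u*Q) else 0)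
            + (if n = m+1 then -((2+X)*(u*Q) + u) else 0)
            + (if n = m+2 then u*Q + u else 0)) * (1-X)^(m+2-n))]
        simp only [add_mul, ite_mul, zero_mul, Finset.sum_add_distrib,
          Finset.sum_ite_eq', Finset.mem_range]
        rw [if_pos (by omega), if_pos (by omega), if_pos (by omega), if_pos (by omega)]
        have d0 : m + 2 - 0 = m + 2 := by omega
        have d1 : m + 2 - m = 2 := by omega
        have d2 : m + 2 - (m+1) = 1 := by omega
        have d3 : m + 2 - (m+2) = 0 := by omega
        rw [d0, d1, d2, d3]
        have f1 : (1-X:k[X])^(m+2) = (1-X)^(m+1) * (1-X)^1 := pow_add _ (m+1) 1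
        rw [f1] at hS1 ⊢
        linear_combination hS1 - X * hu + X * u * hQ
      rw [hsum]; exact isUnit_one
end
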